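/- arXiv:math/0203026 — 3 statements merged into one kernel-verified Lean document; each statement's English description precedes it below -/
import Mathlib

section
/- Let ν be the measure on (0,∞) with density e^{-s}/s with respect to Lebesgue measure. Then for every u ∈ ℝ, ∫_{(0,∞)} (e^{ius} - 1) ν(ds) = -log(1 - iu), where log is the principal branch. -/
open MeasureTheory Set Filter

-- Lemma A: ∫_{0}^{∞} exp(-(c s)) ds = 1/c for Re c > 0
lemma intA (c : ℂ) (hc : 0 < c.re) :
    ∫ s in Set.Ioi (0:ℝ), Complex.exp (-(c * s)) = 1 / c := by
  have hc0 : c ≠ 0 := fun h => by simp [h] at hc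
  have hderiv : ∀ x ∈ Set.Ici (0:ℝ),
      HasDerivAt (fun s : ℝ => -Complex.exp (-(c * s)) / c) (Complex.exp (-(c * x))) x := by
    intro x _
    have h2 : HasDerivAt (fun z : ℂ => -(c * z)) (-c) (x:ℂ) := by
      have h2' := ((hasDerivAt_id (x:ℂ)).const_mul c).neg
      simp only [id, mul_one] at h2'
      exact h2'
    have h3 := (((Complex.hasDerivAt_exp (-(c * (x:ℂ)))).comp (x:ℂ) h2).neg).div_const c
    have h4 : HasDerivAt (fun z : ℂ => -Complex.exp (-(c * z)) / c)
        (Complex.exp (-(c * (x:ℂ)))) (x:ℂ) := by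
      convert h3 using 1
      · rfl
      · rfl
      · rfl
      simp only [mul_neg, neg_neg]
      exact (mul_div_cancel_right₀ _ hc0).symm
    exact h4.comp_ofReal
  have hint : IntegrableOn (fun s : ℝ => Complex.exp (-(c * s))) (Set.Ioi 0) := by
    apply Integrable.mono' (g := fun s : ℝ => Real.exp (-c.re * s))
      (exp_neg_integrableOn_Ioi 0 hc)
    · apply Continuous.aestronglyMeasurable
      continuity
    · filter_upwards with s
      rw [Complex.norm_exp]
      simp [Complex.mul_re]
  have htop : Tendsto (fun x : ℝ => -Complex.exp (-(c * x)) / c) atTop (nhds 0) := by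
    rw [tendsto_zero_iff_norm_tendsto_zero]
    have : (fun x : ℝ => ‖-Complex.exp (-(c * x)) / c‖)
        = fun x : ℝ => Real.exp (-c.re * x) / ‖c‖ := by
      funext x
      rw [norm_div, norm_neg, Complex.norm_exp]
      simp [Complex.mul_re]
    rw [this]
    simpa using (Real.tendsto_exp_atBot.comp
      ((tendsto_id (α := ℝ)).const_mul_atTop_of_neg (r := -c.re) (by linarith))).div_const ‖c‖
  have := integral_Ioi_of_hasDerivAt_of_tendsto' hderiv hint htop
  rw [this]
  simp [hc0]
  rw [neg_div, neg_neg, one_div]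


-- Lemma B: ∫_0^u I/(1-Iv) dv = -log(1-Iu)
lemma intB (u : ℝ) :
    ∫ v in (0:ℝ)..u, Complex.I / (1 - Complex.I * v) = -Complex.log (1 - Complex.I * u) := by
  have hne : ∀ v : ℝ, (1 - Complex.I * v) ≠ 0 := by
    intro v h
    have := congrArg Complex.re h
    simp [Complex.sub_re, Complex.mul_re] at this
  have hderiv : ∀ v : ℝ, HasDerivAt (fun v : ℝ => -Complex.log (1 - Complex.I * v))
      (Complex.I / (1 - Complex.I * v)) v := by
    intro v
    have hre : (0:ℝ) < (1 - Complex.I * v).re := by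
      simp [Complex.sub_re, Complex.mul_re]
    have hlog := Complex.hasDerivAt_log (Or.inl hre)
    have hlin : HasDerivAt (fun z : ℂ => 1 - Complex.I * z) (-Complex.I) ((v:ℝ):ℂ) := by
      simpa using ((hasDerivAt_id ((v:ℝ):ℂ)).const_mul Complex.I).const_sub 1
    have := ((hlog.comp ((v:ℝ):ℂ) hlin).neg).comp_ofReal
    convert this using 1
    · rfl
    rw [div_eq_mul_inv]; ring
  have hcont : ContinuousOn (fun v : ℝ => Complex.I / (1 - Complex.I * v)) (Set.uIcc 0 u) := by
    apply ContinuousOn.div continuousOn_const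
    · fun_prop
    · intro v _; exact hne v
  have := intervalIntegral.integral_eq_sub_of_hasDerivAt
    (fun v _ => hderiv v) (hcont.intervalIntegrable)
  rw [this]
  simp

-- Key inner identity
lemma key (u : ℝ) {s : ℝ} (hs : 0 < s) :
    (Complex.exp (Complex.I * u * s) - 1) * ((Real.exp (-s) / s : ℝ) : ℂ)
      = ∫ v in (0:ℝ)..u, Complex.I * Complex.exp ((Complex.I * v - 1) * s) := by
  have hs0 : (s:ℂ) ≠ 0 := by exact_mod_cast hs.ne'
  have hderiv : ∀ v : ℝ, HasDerivAt (fun v : ℝ => Complex.exp ((Complex.I * v - 1) * s) / s)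
      (Complex.I * Complex.exp ((Complex.I * v - 1) * s)) v := by
    intro v
    have hlin : HasDerivAt (fun z : ℂ => (Complex.I * z - 1) * (s:ℂ)) (Complex.I * s) ((v:ℝ):ℂ) := by
      simpa using ((((hasDerivAt_id ((v:ℝ):ℂ)).const_mul Complex.I).sub_const 1).mul_const (s:ℂ))
    have := (((Complex.hasDerivAt_exp _).comp ((v:ℝ):ℂ) hlin).div_const (s:ℂ)).comp_ofReal
    convert this using 1
    · rfl
    field_simp
  have hcont : Continuous (fun v : ℝ => Complex.I * Complex.exp ((Complex.I * v - 1) * s)) := by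
    fun_prop
  have := intervalIntegral.integral_eq_sub_of_hasDerivAt (a := (0:ℝ)) (b := u)
    (fun v _ => hderiv v) (hcont.continuousOn.intervalIntegrable)
  rw [this]
  have h1 : (Complex.I * u - 1) * s = Complex.I * u * s + (-s : ℝ) := by push_cast; ring
  have h2 : (Complex.I * (0:ℝ) - 1) * s = ((-s : ℝ) : ℂ) := by push_cast; ring
  rw [h1, h2, Complex.exp_add, ← Complex.ofReal_exp]
  push_cast
  field_simp

lemma swap_le {a b : ℝ} (hab : a ≤ b) :
    ∫ s in Set.Ioi (0:ℝ), ∫ v in a..b, Complex.I * Complex.exp ((Complex.I * v - 1) * s)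
      = ∫ v in a..b, ∫ s in Set.Ioi (0:ℝ), Complex.I * Complex.exp ((Complex.I * v - 1) * s) := by
  simp only [intervalIntegral.integral_of_le hab]
  apply MeasureTheory.integral_integral_swap
  have hmeas : AEStronglyMeasurable
      (Function.uncurry fun (s v : ℝ) => Complex.I * Complex.exp ((Complex.I * v - 1) * s))
      ((volume.restrict (Set.Ioi 0)).prod (volume.restrict (Set.Ioc a b))) := by
    apply Continuous.aestronglyMeasurable
    apply continuous_const.mul
    apply Complex.continuous_exp.comp
    fun_prop
  apply Integrable.mono' (g := fun p : ℝ × ℝ => Real.exp (-p.1) * 1) _ hmeas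
  · filter_upwards with p
    rw [Function.uncurry]
    rw [norm_mul, Complex.norm_I, one_mul,
      Complex.norm_exp, mul_one]
    apply le_of_eq
    congr 1
    simp [Complex.sub_re, Complex.mul_re]
  · apply MeasureTheory.Integrable.mul_prod (f := fun s => Real.exp (-s)) (g := fun _ : ℝ => (1:ℝ))
    · simpa [IntegrableOn] using exp_neg_integrableOn_Ioi (0:ℝ) one_pos
    · rw [integrable_const_iff]
      right
      exact isFiniteMeasure_restrict.mpr measure_Ioc_lt_top.ne

lemma swap_all (u : ℝ) :
    ∫ s in Set.Ioi (0:ℝ), ∫ v in (0:ℝ)..u, Complex.I * Complex.exp ((Complex.I * v - 1) * s)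
      = ∫ v in (0:ℝ)..u, ∫ s in Set.Ioi (0:ℝ), Complex.I * Complex.exp ((Complex.I * v - 1) * s) := by
  rcases le_total 0 u with h | h
  · exact swap_le h
  · have h1 : ∀ s : ℝ, ∫ v in (0:ℝ)..u, Complex.I * Complex.exp ((Complex.I * v - 1) * s)
        = -∫ v in u..(0:ℝ), Complex.I * Complex.exp ((Complex.I * v - 1) * s) := fun s =>
      intervalIntegral.integral_symm u 0
    simp only [h1, integral_neg, swap_le h]
    rw [intervalIntegral.integral_symm u 0]

theorem stmt8 (u : ℝ) :
    ∫ s in Set.Ioi (0 : ℝ),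
        (Complex.exp (Complex.I * u * s) - 1) * ((Real.exp (-s) / s : ℝ) : ℂ)
      = -Complex.log (1 - Complex.I * u) := by
  have step1 : ∫ s in Set.Ioi (0 : ℝ),
        (Complex.exp (Complex.I * u * s) - 1) * ((Real.exp (-s) / s : ℝ) : ℂ)
      = ∫ s in Set.Ioi (0:ℝ), ∫ v in (0:ℝ)..u,
          Complex.I * Complex.exp ((Complex.I * v - 1) * s) := by
    apply setIntegral_congr_fun measurableSet_Ioi
    intro s hs
    exact key u hs
  rw [step1, swap_all u]
  have step2 : ∀ v : ℝ, ∫ s in Set.Ioi (0:ℝ), Complex.I * Complex.exp ((Complex.I * v - 1) * s)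
      = Complex.I / (1 - Complex.I * v) := by
    intro v
    rw [MeasureTheory.integral_const_mul]
    have hre : (0:ℝ) < (1 - Complex.I * v).re := by
      simp [Complex.sub_re, Complex.mul_re]
    have heq : ∀ s : ℝ, Complex.exp ((Complex.I * v - 1) * s)
        = Complex.exp (-((1 - Complex.I * v) * s)) := by
      intro s; congr 1; ring
    rw [setIntegral_congr_fun measurableSet_Ioi (fun s _ => heq s), intA _ hre]
    rw [mul_one_div]
  simp only [step2]
  exact intB u
end

section
/- Let λ ≠ 2 and α ≠ β with αβ = 1, α+β = -λ, c_λ ∈ ℝ. Define polynomials P^{(n)}_λ by the recurrence x P^{(n)}_λ(x) = P^{(n+1)}_λ(x) + (λn + c_λ) P^{(n)}_λ(x) + n² P^{(n-1)}_λ(x), P^{(-1)}_λ = 0, P^{(0)}_λ = 1. Then for u in a neighborhood of 0 in ℂ, Σ_{n≥0} (u^n/n!) P^{(n)}_λ(x) = ((1-βu)^{1/β}/(1-αu)^{1/α})^{-1/(α-β)} · ((1-βu)/(1-αu))^{(x - c_λ)/(α-β)}. -/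
set_option maxHeartbeats 1600000

open Polynomial Complex

private lemma tri_aux (p q : ℝ) : |p - q| ≤ |p| + |q| := by
  simpa [sub_eq_add_neg, abs_neg] using abs_add_le p (-q)

private lemma Fderiv (α β s t : ℂ) (hα : α ≠ 0) (hβ : β ≠ 0) (hαβ : α - β ≠ 0) (x c : ℂ)
    (hs : s = -1/(α-β)) (ht : t = (x - c)/(α-β)) (u : ℂ)
    (h1 : (1 - β*u) ∈ slitPlane) (h2 : (1 - α*u) ∈ slitPlane)
    (h3 : ((1-β*u)^(1/β)/(1-α*u)^(1/α)) ∈ slitPlane)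
    (h4 : ((1-β*u)/(1-α*u)) ∈ slitPlane) :
    HasDerivAt (fun u => ((1-β*u)^(1/β)/(1-α*u)^(1/α))^s * ((1-β*u)/(1-α*u))^t)
      ((((1-β*u)^(1/β)/(1-α*u)^(1/α))^s * ((1-β*u)/(1-α*u))^t) * ((x - c - u)/((1-α*u)*(1-β*u)))) u := by
  have hPne : (1 - β*u) ≠ 0 := slitPlane_ne_zero h1
  have hQne : (1 - α*u) ≠ 0 := slitPlane_ne_zero h2
  have hpne : (1 - β*u)^(1/β) ≠ 0 := by
    simp [cpow_eq_zero_iff, hPne]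
  have hqne : (1 - α*u)^(1/α) ≠ 0 := by
    simp [cpow_eq_zero_iff, hQne]
  have hAne : ((1-β*u)^(1/β)/(1-α*u)^(1/α)) ≠ 0 := div_ne_zero hpne hqne
  have hBne : ((1-β*u)/(1-α*u)) ≠ 0 := div_ne_zero hPne hQne
  have hP : HasDerivAt (fun v : ℂ => 1 - β*v) (-β) u := by
    simpa using ((hasDerivAt_id u).const_mul β).const_sub 1
  have hQ : HasDerivAt (fun v : ℂ => 1 - α*v) (-α) u := by
    simpa using ((hasDerivAt_id u).const_mul α).const_sub 1
  have hp := hP.cpow_const (c := 1/β) h1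
  have hq := hQ.cpow_const (c := 1/α) h2
  have hA := hp.div hq hqne
  have hAs := hA.cpow_const (c := s) h3
  have hB := hP.div hQ hQne
  have hBt := hB.cpow_const (c := t) h4
  have hF := hAs.mul hBt
  have e1 : (1-β*u)^(1/β - 1) = (1-β*u)^(1/β) / (1-β*u) := by
    rw [cpow_sub _ _ hPne, cpow_one]
  have e2 : (1-α*u)^(1/α - 1) = (1-α*u)^(1/α) / (1-α*u) := by
    rw [cpow_sub _ _ hQne, cpow_one]
  have e3 : ((1-β*u)^(1/β)/(1-α*u)^(1/α))^(s - 1)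
      = ((1-β*u)^(1/β)/(1-α*u)^(1/α))^s / ((1-β*u)^(1/β)/(1-α*u)^(1/α)) := by
    rw [cpow_sub _ _ hAne, cpow_one]
  have e4 : ((1-β*u)/(1-α*u))^(t - 1)
      = ((1-β*u)/(1-α*u))^t / ((1-β*u)/(1-α*u)) := by
    rw [cpow_sub _ _ hBne, cpow_one]
  have keyA : s * ((1 - β * u) ^ (1 / β) / (1 - α * u) ^ (1 / α)) ^ (s - 1) *
        ((1 / β * (1 - β * u) ^ (1 / β - 1) * -β * (1-α*u)^(1/α) -
          (1-β*u)^(1/β) * (1 / α * (1 - α * u) ^ (1 / α - 1) * -α)) / ((1-α*u)^(1/α)) ^ 2)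
      = (((1 - β * u) ^ (1 / β) / (1 - α * u) ^ (1 / α)) ^ s) * (s * (1/(1-α*u) - 1/(1-β*u))) := by
    rw [e1, e2, e3]
    set a' := ((1-β*u)^(1/β)/(1-α*u)^(1/α))^s with ha'
    set p := (1-β*u)^(1/β) with hpd
    set q := (1-α*u)^(1/α) with hqd
    set PP := 1 - β*u with hPPd
    set QQ := 1 - α*u with hQQd
    clear_value a' p q PP QQ
    have h1' : (1/β * (p/PP) * -β * q - p * (1/α * (q/QQ) * -α)) = p * q * (1/QQ - 1/PP) := by
      field_simp
      ring
    have h2' : a'/(p/q) = a' * q / p := by rw [div_div_eq_mul_div]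
    rw [h1', h2']
    field_simp
  have keyB : t * ((1-β*u)/(1-α*u)) ^ (t - 1) *
        ((-β * (1 - α * u) - (1 - β * u) * -α) / (1 - α * u) ^ 2)
      = (((1-β*u)/(1-α*u)) ^ t) *
          (t * ((-β * (1 - α * u) - (1 - β * u) * -α)/((1-β*u)*(1-α*u)))) := by
    rw [e4]
    set b' := ((1-β*u)/(1-α*u))^t with hb'
    set PP := 1 - β*u with hPPd
    set QQ := 1 - α*u with hQQd
    clear_value b' PP QQ
    rw [div_div_eq_mul_div]
    field_simp
  refine hF.congr_deriv ?_
  simp only [Pi.div_apply]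
  rw [keyA, keyB]
  set a' := ((1-β*u)^(1/β)/(1-α*u)^(1/α))^s with ha'
  set b' := ((1-β*u)/(1-α*u))^t with hb'
  clear_value a' b'
  rw [hs, ht]
  field_simp
  ring

private lemma seq_bound (lam c x : ℝ) (e : ℕ → ℝ) (he0 : e 0 = 1)
    (herec : ∀ n : ℕ, e (n+1) = (x - (lam*n+c)) * e n - (n:ℝ)^2 * e (n-1)) :
    ∀ n : ℕ, |e n| ≤ n.factorial * (2*(|x|+|c|+|lam|+1))^n := by
  set M : ℝ := |x|+|c|+|lam|+1 with hM
  set N : ℝ := 2*M with hN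
  have habs : (0:ℝ) ≤ |x|+|c|+|lam| := by positivity
  have hM1 : 1 ≤ M := by rw [hM]; linarith
  have hN2 : 2 ≤ N := by rw [hN]; linarith
  have hN0 : 0 < N := by linarith
  have key : ∀ n : ℕ, |e n| ≤ n.factorial * N^n ∧ |e (n+1)| ≤ (n+1).factorial * N^(n+1) := by
    intro n
    induction n with
    | zero =>
      constructor
      · simp [he0]
      · have h1 : e 1 = x - c := by
          have := herec 0
          simpa [he0] using this
        have h2 : |x - c| ≤ |x| + |c| := tri_aux x c
        have h3 : |x| + |c| ≤ N := by rw [hN, hM]; linarith [abs_nonneg lam]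
        simp only [h1, Nat.factorial_one, Nat.cast_one, one_mul, pow_one, zero_add]
        linarith
    | succ n ih =>
      obtain ⟨ih1, ih2⟩ := ih
      refine ⟨ih2, ?_⟩
      have hA : |x - (lam*((n:ℝ)+1)+c)| ≤ |x| + (|lam| * ((n:ℝ)+1) + |c|) := by
        refine (tri_aux _ _).trans ?_
        have h5 : |lam*((n:ℝ)+1)+c| ≤ |lam| * ((n:ℝ)+1) + |c| := by
          refine (abs_add_le _ _).trans ?_
          rw [abs_mul, _root_.abs_of_nonneg (by positivity : (0:ℝ) ≤ (n:ℝ)+1)]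
        linarith
      have hstep : |e (n+1+1)| ≤ (|x| + (|lam| * ((n:ℝ)+1) + |c|)) * |e (n+1)| + ((n:ℝ)+1)^2 * |e n| := by
        have hr := herec (n+1)
        simp only [Nat.add_sub_cancel] at hr
        push_cast at hr
        rw [hr]
        refine (tri_aux _ _).trans ?_
        rw [abs_mul, abs_mul, _root_.abs_of_nonneg (by positivity : (0:ℝ) ≤ ((n:ℝ)+1)^2)]
        exact add_le_add (mul_le_mul_of_nonneg_right hA (abs_nonneg _)) le_rfl
      have hco : |x| + (|lam| * ((n:ℝ)+1) + |c|) ≤ M*((n:ℝ)+2) := by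
        have hn0 : (0:ℝ) ≤ (n:ℝ) := Nat.cast_nonneg n
        have hlM : |lam| ≤ M := by rw [hM]; linarith [abs_nonneg x, abs_nonneg c]
        nlinarith [abs_nonneg x, abs_nonneg c, abs_nonneg lam]
      have hfac1 : ((n+1+1).factorial : ℝ) = ((n:ℝ)+2) * ((n+1).factorial : ℝ) := by
        rw [Nat.factorial_succ]; push_cast; ring
      have hfac2 : ((n+1).factorial : ℝ) = ((n:ℝ)+1) * (n.factorial : ℝ) := by
        rw [Nat.factorial_succ]; push_cast; ring
      have hNn : (0:ℝ) < N^n := pow_pos hN0 n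
      have hfp : (0:ℝ) < ((n+1).factorial : ℝ) := by exact_mod_cast Nat.factorial_pos _
      have hfp0 : (0:ℝ) < (n.factorial : ℝ) := by exact_mod_cast Nat.factorial_pos _
      calc |e (n+1+1)| ≤ (|x| + (|lam| * ((n:ℝ)+1) + |c|)) * |e (n+1)| + ((n:ℝ)+1)^2 * |e n| := hstep
        _ ≤ (M*((n:ℝ)+2)) * (((n+1).factorial : ℝ) * N^(n+1)) + ((n:ℝ)+1)^2 * ((n.factorial:ℝ) * N^n) := by
            gcongr
        _ ≤ ((n+1+1).factorial : ℝ) * N^(n+1+1) := by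
            rw [hfac1, hfac2, show N^(n+1+1) = N^n*N*N by ring, show N^(n+1) = N^n*N by ring]
            have h4 : (4:ℝ) ≤ N*N := by nlinarith
            have e1 : M*((n:ℝ)+2) * ((((n:ℝ)+1) * (n.factorial:ℝ)) * (N^n*N))
                = (1/2) * ((((n:ℝ)+2)*(((n:ℝ)+1)*(n.factorial:ℝ)))*(N^n*N*N)) := by
              rw [hN]; ring
            have hT0 : (0:ℝ) ≤ (((n:ℝ)+2)*(((n:ℝ)+1)*(n.factorial:ℝ)))*(N^n*N*N) := by positivity
            have hb : ((n:ℝ)+1)^2 * ((n.factorial:ℝ) * N^n)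
                ≤ (((n:ℝ)+2)*((n:ℝ)+1)) * ((n.factorial:ℝ) * N^n) := by
              nlinarith [mul_pos hfp0 hNn, Nat.cast_nonneg (α := ℝ) n]
            have e2 : ((n:ℝ)+1)^2 * ((n.factorial:ℝ) * N^n)
                ≤ (1/4) * ((((n:ℝ)+2)*(((n:ℝ)+1)*(n.factorial:ℝ)))*(N^n*N*N)) := by
              nlinarith [mul_pos hfp0 hNn, mul_le_mul_of_nonneg_left h4
                (le_of_lt (mul_pos (mul_pos (by positivity : (0:ℝ) < ((n:ℝ)+2)*((n:ℝ)+1)) hfp0) hNn))]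
            nlinarith [e1, e2, hT0]
  exact fun n => (key n).1

private lemma coeff_rec (lam c x : ℝ) (e : ℕ → ℝ) (he0 : e 0 = 1)
    (herec : ∀ n : ℕ, e (n+1) = (x - (lam*n+c)) * e n - (n:ℝ)^2 * e (n-1)) (n : ℕ) :
    ((n:ℂ)+1) * (((e (n+1) : ℝ):ℂ) / (((n+1).factorial : ℕ) : ℂ))
      = ((x:ℂ) - lam*n - c) * (((e n:ℝ):ℂ)/((n.factorial : ℕ) : ℂ))
        - (n:ℂ) * (((e (n-1):ℝ):ℂ)/(((n-1).factorial : ℕ) : ℂ)) := by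
  cases n with
  | zero =>
    have h1 : e 1 = x - c := by
      have := herec 0
      simpa [he0] using this
    simp only [Nat.zero_eq, zero_add, Nat.cast_zero, Nat.sub_self, Nat.factorial_one,
      Nat.factorial_zero, Nat.cast_one, h1, he0]
    push_cast
    ring
  | succ m =>
    have h1 : ((e (m+1+1) : ℝ):ℂ)
        = ((x:ℂ) - ((lam:ℂ)*((m:ℂ)+1)+c)) * ((e (m+1):ℝ):ℂ) - ((m:ℂ)+1)^2 * ((e m : ℝ):ℂ) := by
      have h := herec (m+1)
      simp only [Nat.add_sub_cancel] at h
      push_cast [h]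
      ring
    have hf0 : ((m.factorial : ℕ) : ℂ) ≠ 0 := Nat.cast_ne_zero.mpr (Nat.factorial_ne_zero _)
    have hfacc1 : (((m+1+1).factorial : ℕ) : ℂ) = ((m:ℂ)+2) * ((m:ℂ)+1) * ((m.factorial : ℕ):ℂ) := by
      rw [Nat.factorial_succ, Nat.factorial_succ]; push_cast; ring
    have hfacc2 : (((m+1).factorial : ℕ) : ℂ) = ((m:ℂ)+1) * ((m.factorial : ℕ):ℂ) := by
      rw [Nat.factorial_succ]; push_cast; ring
    simp only [Nat.add_sub_cancel]
    rw [h1, hfacc1, hfacc2]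
    have hm1 : ((m:ℂ)+1) ≠ 0 := by
      have h5 : ((m+1:ℕ):ℂ) ≠ 0 := Nat.cast_ne_zero.mpr (by omega)
      push_cast at h5
      exact h5
    have hm2 : ((m:ℂ)+2) ≠ 0 := by
      have h6 : ((m+2:ℕ):ℂ) ≠ 0 := Nat.cast_ne_zero.mpr (by omega)
      push_cast at h6
      exact h6
    push_cast
    field_simp
    ring

theorem stmt14 (lam : ℝ) (hlam : lam ≠ 2) (α β : ℂ) (hab : α ≠ β)
    (hprod : α * β = 1) (hsum : α + β = -(lam : ℂ)) (c : ℝ)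
    (P : ℕ → Polynomial ℝ)
    (h0 : P 0 = 1)
    (hrec : ∀ n : ℕ,
      P (n + 1) = (X - Polynomial.C (lam * n + c)) * P n - Polynomial.C ((n : ℝ) ^ 2) * P (n - 1)) :
    ∀ x : ℝ, ∃ U ∈ nhds (0 : ℂ), ∀ u ∈ U,
      ∑' n : ℕ, u ^ n / (Nat.factorial n) * (((P n).eval x : ℝ) : ℂ)
        = ((1 - β * u) ^ (1 / β) / (1 - α * u) ^ (1 / α)) ^ (-1 / (α - β)) *
          ((1 - β * u) / (1 - α * u)) ^ (((x : ℂ) - c) / (α - β)) := by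
  intro x
  have hα : α ≠ 0 := by
    intro h; rw [h, zero_mul] at hprod; exact zero_ne_one hprod
  have hβ : β ≠ 0 := by
    intro h; rw [h, mul_zero] at hprod; exact zero_ne_one hprod
  have hαβ : α - β ≠ 0 := sub_ne_zero.mpr hab
  set e : ℕ → ℝ := fun n => (P n).eval x with he
  have he0 : e 0 = 1 := by simp [he, h0]
  have herec : ∀ n : ℕ, e (n+1) = (x - (lam*n+c)) * e n - (n:ℝ)^2 * e (n-1) := by
    intro n
    simp only [he]
    rw [hrec n]
    simp
  set M : ℝ := |x| + |c| + |lam| + 1 with hMdef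
  set N : ℝ := 2*M with hNdef
  have habs : (0:ℝ) ≤ |x| + |c| + |lam| := by positivity
  have hM1 : 1 ≤ M := by rw [hMdef]; linarith
  have hN2 : 2 ≤ N := by rw [hNdef]; linarith
  have hN0 : 0 < N := by linarith
  have hNne : N ≠ 0 := ne_of_gt hN0
  have hbound : ∀ n : ℕ, |e n| ≤ n.factorial * N^n := by
    intro n
    rw [hNdef, hMdef]
    exact seq_bound lam c x e he0 herec n
  set a : ℕ → ℂ := fun n => ((e n : ℝ) : ℂ) / ((n.factorial : ℕ) : ℂ) with hadef
  have hrecC : ∀ n : ℕ, ((n:ℂ)+1) * a (n+1) = ((x:ℂ) - lam*n - c) * a n - (n:ℂ) * a (n-1) := by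
    intro n
    simpa [hadef] using coeff_rec lam c x e he0 herec n
  have hanorm : ∀ n : ℕ, ‖a n‖ ≤ N^n := by
    intro n
    rw [hadef]
    rw [norm_div, Complex.norm_real, Complex.norm_natCast]
    rw [div_le_iff₀ (by exact_mod_cast Nat.factorial_pos n)]
    calc |e n| ≤ n.factorial * N^n := hbound n
      _ = N^n * n.factorial := by ring
  have Sgeo : Summable (fun n : ℕ => ((1:ℝ)/2)^n) :=
    summable_geometric_of_lt_one (by norm_num) (by norm_num)
  have Ssum : Summable (fun n : ℕ => ((n:ℝ)+1) * (1/2)^n) := by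
    have h1 := summable_pow_mul_geometric_of_norm_lt_one (R := ℝ) 1 (r := 1/2) (by norm_num)
    exact (((by simpa [pow_one] using h1 : Summable fun n : ℕ => (n:ℝ) * (1/2)^n)).add Sgeo).congr
      (fun n => by ring)
  have q1 : ∀ n : ℕ, (N:ℝ)^n * (1/(2*N))^n = (1/2)^n := by
    intro n
    rw [← mul_pow]
    congr 1
    field_simp
  have q2 : ∀ n : ℕ, (N:ℝ)^(n+1) * (1/(2*N))^n = N * (1/2)^n := by
    intro n
    have h := q1 n
    calc (N:ℝ)^(n+1) * (1/(2*N))^n = N * (N^n * (1/(2*N))^n) := by ring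
      _ = N * (1/2)^n := by rw [h]
  set ρbig : ℝ := 1/(2*N) with hρbigdef
  have hρbig0 : 0 < ρbig := by rw [hρbigdef]; positivity
  -- derivative-term bound
  have dbnd : ∀ z : ℂ, ‖z‖ ≤ ρbig → ∀ n : ℕ,
      ‖a n * ((n:ℂ) * z^(n-1))‖ ≤ (2*N) * (((n:ℝ)+1) * (1/2)^n) := by
    intro z hz n
    have hz' : ‖z‖ ≤ 1/(2*N) := by rw [hρbigdef] at hz; exact hz
    have hzn : ∀ k : ℕ, ‖z‖^k ≤ (1/(2*N))^k := fun k => pow_le_pow_left₀ (norm_nonneg z) hz' k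
    cases n with
    | zero =>
      simp only [Nat.cast_zero, zero_mul, mul_zero, norm_zero]
      positivity
    | succ m =>
      simp only [Nat.add_sub_cancel]
      rw [norm_mul, norm_mul, norm_pow, Complex.norm_natCast]
      calc ‖a (m+1)‖ * (((m+1:ℕ):ℝ) * ‖z‖^m) ≤ N^(m+1) * (((m+1:ℕ):ℝ) * (1/(2*N))^m) :=
            mul_le_mul (hanorm (m+1)) (mul_le_mul_of_nonneg_left (hzn m) (by positivity))
              (by positivity) (by positivity)
        _ = ((m:ℝ)+1) * (N^(m+1) * (1/(2*N))^m) := by push_cast; ring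
        _ = ((m:ℝ)+1) * (N * (1/2)^m) := by rw [q2 m]
        _ ≤ (2*N) * ((((m+1:ℕ):ℝ)+1) * (1/2)^(m+1)) := by
            push_cast
            rw [pow_succ]
            have hp : (0:ℝ) ≤ (1/2:ℝ)^m := by positivity
            nlinarith [mul_nonneg (le_of_lt hN0) hp]
  -- summability facts
  have sfact : ∀ y : ℂ, ‖y‖ ≤ ρbig →
      (Summable (fun n : ℕ => a n * y^n) ∧
       Summable (fun n : ℕ => ((n:ℂ)+1) * a (n+1) * y^n) ∧
       Summable (fun n : ℕ => (n:ℂ) * a n * y^n) ∧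
       Summable (fun n : ℕ => (n:ℂ) * a (n-1) * y^n) ∧
       Summable (fun n : ℕ => a n * ((n:ℂ) * y^(n-1)))) := by
    intro y hy
    have hy' : ‖y‖ ≤ 1/(2*N) := by rw [hρbigdef] at hy; exact hy
    have hyn : ∀ k : ℕ, ‖y‖^k ≤ (1/(2*N))^k := fun k => pow_le_pow_left₀ (norm_nonneg y) hy' k
    refine ⟨?_, ?_, ?_, ?_, ?_⟩
    · refine Summable.of_norm_bounded (g := fun n => ((1:ℝ)/2)^n) Sgeo (fun n => ?_)
      rw [norm_mul, norm_pow]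
      calc ‖a n‖ * ‖y‖^n ≤ N^n * (1/(2*N))^n :=
            mul_le_mul (hanorm n) (hyn n) (by positivity) (by positivity)
        _ = (1/2)^n := q1 n
    · refine Summable.of_norm_bounded (g := fun n => N * (((n:ℝ)+1) * (1/2)^n)) (Ssum.mul_left N)
        (fun n => ?_)
      rw [norm_mul, norm_mul, norm_pow]
      have hn1 : ‖(n:ℂ)+1‖ = (n:ℝ)+1 := by
        rw [show ((n:ℂ)+1) = ((n+1:ℕ):ℂ) by push_cast; ring, Complex.norm_natCast]
        push_cast; ring
      rw [hn1]
      calc ((n:ℝ)+1) * ‖a (n+1)‖ * ‖y‖^n ≤ ((n:ℝ)+1) * N^(n+1) * (1/(2*N))^n := by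
            refine mul_le_mul (mul_le_mul_of_nonneg_left (hanorm (n+1)) (by positivity)) (hyn n)
              (by positivity) (by positivity)
        _ = N * (((n:ℝ)+1) * (1/2)^n) := by
            rw [mul_assoc, q2 n]; ring
    · refine Summable.of_norm_bounded (g := fun n => ((n:ℝ)+1) * (1/2)^n) Ssum (fun n => ?_)
      rw [norm_mul, norm_mul, norm_pow, Complex.norm_natCast]
      calc (n:ℝ) * ‖a n‖ * ‖y‖^n ≤ (n:ℝ) * N^n * (1/(2*N))^n := by
            refine mul_le_mul (mul_le_mul_of_nonneg_left (hanorm n) (Nat.cast_nonneg n)) (hyn n)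
              (by positivity) (by positivity)
        _ = (n:ℝ) * (1/2)^n := by rw [mul_assoc, q1 n]
        _ ≤ ((n:ℝ)+1) * (1/2)^n := by
            have hp : (0:ℝ) ≤ (1/2:ℝ)^n := by positivity
            nlinarith
    · refine Summable.of_norm_bounded (g := fun n => ((n:ℝ)+1) * (1/2)^n) Ssum (fun n => ?_)
      cases n with
      | zero =>
        simp only [Nat.cast_zero, zero_mul, norm_zero]
        positivity
      | succ m =>
        simp only [Nat.add_sub_cancel]
        rw [norm_mul, norm_mul, norm_pow, Complex.norm_natCast]
        have q3 : (N:ℝ)^m * (1/(2*N))^(m+1) = (1/2)^m * (1/(2*N)) := by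
          rw [pow_succ, ← mul_assoc, q1 m]
        calc ((m+1:ℕ):ℝ) * ‖a m‖ * ‖y‖^(m+1) ≤ ((m+1:ℕ):ℝ) * N^m * (1/(2*N))^(m+1) := by
              refine mul_le_mul (mul_le_mul_of_nonneg_left (hanorm m) (Nat.cast_nonneg _))
                (hyn (m+1)) (by positivity) (by positivity)
          _ = ((m:ℝ)+1) * ((1/2)^m * (1/(2*N))) := by
              push_cast
              rw [mul_assoc, q3]
          _ ≤ (((m+1:ℕ):ℝ)+1) * (1/2)^(m+1) := by
              push_cast
              rw [pow_succ]
              have hp : (0:ℝ) ≤ (1/2:ℝ)^m := by positivity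
              have h12 : 1/(2*N) ≤ (1/2:ℝ) := by
                rw [div_le_div_iff₀ (by linarith) (by norm_num)]
                linarith
              refine mul_le_mul (by linarith) (mul_le_mul_of_nonneg_left h12 hp)
                (by positivity) (by positivity)
    · exact Summable.of_norm_bounded (Ssum.mul_left (2*N)) (dbnd y hy)
  -- the ODE for the series
  have qfact : ∀ y : ℂ, (1 + (lam:ℂ)*y + y^2) = (1-α*y)*(1-β*y) := by
    intro y
    linear_combination y*hsum - y^2*hprod
  have ode : ∀ y : ℂ, ‖y‖ ≤ ρbig →
      (1 + (lam:ℂ)*y + y^2) * (∑' n : ℕ, a n * ((n:ℂ) * y^(n-1)))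
        = ((x:ℂ) - c - y) * ∑' n : ℕ, a n * y^n := by
    intro y hy
    obtain ⟨sg, sE1, sna, snb, s0⟩ := sfact y hy
    have hshift : (∑' n : ℕ, a n * ((n:ℂ) * y^(n-1))) = ∑' n : ℕ, ((n:ℂ)+1) * a (n+1) * y^n := by
      rw [Summable.tsum_eq_zero_add s0]
      simp only [Nat.cast_zero, zero_mul, mul_zero, zero_add]
      exact tsum_congr fun n => by
        simp only [Nat.add_sub_cancel]
        push_cast
        ring
    rw [hshift, ← tsum_mul_left, ← tsum_mul_left]
    have sU : Summable (fun n : ℕ => (lam:ℂ)*y*(((n:ℂ)+1) * a (n+1) * y^n)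
        + (y^2*(((n:ℂ)+1) * a (n+1) * y^n) + y*(a n * y^n))) :=
      (sE1.mul_left _).add ((sE1.mul_left _).add (sg.mul_left _))
    have sW : Summable (fun n : ℕ => (lam:ℂ)*((n:ℂ) * a n * y^n) + (n:ℂ) * a (n-1) * y^n) :=
      (sna.mul_left _).add snb
    have sZ : Summable (fun n : ℕ => y * ((n:ℂ) * a n * y^n)) := sna.mul_left y
    have sWs : Summable (fun n : ℕ =>
        (lam:ℂ)*(((n+1:ℕ):ℂ) * a (n+1) * y^(n+1)) + ((n+1:ℕ):ℂ) * a ((n+1)-1) * y^(n+1)) :=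
      (summable_nat_add_iff 1).mpr sW
    have key : ∀ n : ℕ, (1 + (lam:ℂ)*y + y^2) * (((n:ℂ)+1) * a (n+1) * y^n)
        = ((x:ℂ) - c - y) * (a n * y^n)
          + (((lam:ℂ)*y*(((n:ℂ)+1) * a (n+1) * y^n)
              + (y^2*(((n:ℂ)+1) * a (n+1) * y^n) + y*(a n * y^n)))
             - ((lam:ℂ)*((n:ℂ) * a n * y^n) + (n:ℂ) * a (n-1) * y^n)) := by
      intro n
      linear_combination (y^n) * hrecC n
    rw [tsum_congr key, Summable.tsum_add (sg.mul_left _) (sU.sub sW)]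
    have hzero : (∑' n : ℕ, (((lam:ℂ)*y*(((n:ℂ)+1) * a (n+1) * y^n)
        + (y^2*(((n:ℂ)+1) * a (n+1) * y^n) + y*(a n * y^n)))
        - ((lam:ℂ)*((n:ℂ) * a n * y^n) + (n:ℂ) * a (n-1) * y^n))) = 0 := by
      rw [Summable.tsum_sub sU sW]
      have hW : (∑' n : ℕ, ((lam:ℂ)*((n:ℂ) * a n * y^n) + (n:ℂ) * a (n-1) * y^n))
          = ∑' n : ℕ, ((lam:ℂ)*(((n+1:ℕ):ℂ) * a (n+1) * y^(n+1))
              + ((n+1:ℕ):ℂ) * a ((n+1)-1) * y^(n+1)) := by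
        rw [Summable.tsum_eq_zero_add sW]
        simp only [Nat.cast_zero, zero_mul, mul_zero, mul_one, pow_zero, add_zero, zero_add]
      rw [hW, ← Summable.tsum_sub sU sWs]
      have key2 : ∀ n : ℕ, (((lam:ℂ)*y*(((n:ℂ)+1) * a (n+1) * y^n)
          + (y^2*(((n:ℂ)+1) * a (n+1) * y^n) + y*(a n * y^n)))
          - ((lam:ℂ)*(((n+1:ℕ):ℂ) * a (n+1) * y^(n+1)) + ((n+1:ℕ):ℂ) * a ((n+1)-1) * y^(n+1)))
          = (y * (((n+1:ℕ):ℂ) * a (n+1) * y^(n+1))) - (y * ((n:ℂ) * a n * y^n)) := by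
        intro n
        simp only [Nat.add_sub_cancel]
        push_cast
        ring
      rw [tsum_congr key2]
      have sZs : Summable (fun n : ℕ => y * (((n+1:ℕ):ℂ) * a (n+1) * y^(n+1))) :=
        (summable_nat_add_iff 1).mpr sZ
      rw [Summable.tsum_sub sZs sZ, Summable.tsum_eq_zero_add sZ]
      simp
    rw [hzero, add_zero]
  -- the sum function and its derivative
  set H : ℂ → ℂ := fun z => ∑' n : ℕ, a n * z^n with hHdef
  have hg0 : Summable (fun n : ℕ => a n * (0:ℂ)^n) := by
    apply summable_of_ne_finset_zero (s := {0})
    intro n hn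
    simp [zero_pow (by simpa using hn)]
  have Hderiv : ∀ y ∈ Metric.ball (0:ℂ) ρbig,
      HasDerivAt H (∑' n : ℕ, a n * ((n:ℂ) * y^(n-1))) y := by
    intro y hy
    exact hasDerivAt_tsum_of_isPreconnected (Ssum.mul_left (2*N)) Metric.isOpen_ball
      (convex_ball _ _).isPreconnected
      (fun n z _ => (hasDerivAt_pow n z).const_mul (a n))
      (fun n z hz => dbnd z (le_of_lt (mem_ball_zero_iff.mp hz)) n)
      (Metric.mem_ball_self hρbig0) hg0 hy
  -- slit plane conditions near 0
  have hslit : ∀ᶠ u in nhds (0:ℂ), ((1 - β*u) ∈ slitPlane ∧ (1 - α*u) ∈ slitPlane ∧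
      ((1-β*u)^(1/β)/(1-α*u)^(1/α)) ∈ slitPlane ∧ ((1-β*u)/(1-α*u)) ∈ slitPlane) := by
    have c1 : ContinuousAt (fun u : ℂ => 1 - β*u) 0 := by fun_prop
    have c2 : ContinuousAt (fun u : ℂ => 1 - α*u) 0 := by fun_prop
    have hv1 : (1:ℂ) - β*0 = 1 := by ring
    have hv2 : (1:ℂ) - α*0 = 1 := by ring
    have c1' : ContinuousAt (fun u : ℂ => (1-β*u)^(1/β)) 0 := by
      refine ContinuousAt.comp (g := fun z : ℂ => z^((1:ℂ)/β)) ?_ c1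
      show ContinuousAt (fun z : ℂ => z^((1:ℂ)/β)) (1 - β*0)
      rw [hv1]
      exact continuousAt_cpow_const one_mem_slitPlane
    have c2' : ContinuousAt (fun u : ℂ => (1-α*u)^(1/α)) 0 := by
      refine ContinuousAt.comp (g := fun z : ℂ => z^((1:ℂ)/α)) ?_ c2
      show ContinuousAt (fun z : ℂ => z^((1:ℂ)/α)) (1 - α*0)
      rw [hv2]
      exact continuousAt_cpow_const one_mem_slitPlane
    have c3 : ContinuousAt (fun u : ℂ => (1-β*u)^(1/β)/(1-α*u)^(1/α)) 0 := by
      refine c1'.div c2' ?_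
      show ((1:ℂ)-α*0)^((1:ℂ)/α) ≠ 0
      rw [hv2, one_cpow]
      exact one_ne_zero
    have c4 : ContinuousAt (fun u : ℂ => (1-β*u)/(1-α*u)) 0 := by
      refine c1.div c2 ?_
      show (1:ℂ) - α*0 ≠ 0
      rw [hv2]
      exact one_ne_zero
    have m1 := c1.eventually_mem (isOpen_slitPlane.mem_nhds
      (show (1:ℂ)-β*0 ∈ slitPlane by rw [hv1]; exact one_mem_slitPlane))
    have m2 := c2.eventually_mem (isOpen_slitPlane.mem_nhds
      (show (1:ℂ)-α*0 ∈ slitPlane by rw [hv2]; exact one_mem_slitPlane))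
    have m3 := c3.eventually_mem (isOpen_slitPlane.mem_nhds
      (show ((1:ℂ)-β*0)^((1:ℂ)/β)/((1:ℂ)-α*0)^((1:ℂ)/α) ∈ slitPlane by
        rw [hv1, hv2, one_cpow, one_cpow]
        simpa using one_mem_slitPlane))
    have m4 := c4.eventually_mem (isOpen_slitPlane.mem_nhds
      (show ((1:ℂ)-β*0)/((1:ℂ)-α*0) ∈ slitPlane by
        rw [hv1, hv2]
        simpa using one_mem_slitPlane))
    exact m1.and (m2.and (m3.and m4))
  obtain ⟨ε, hε0, hεmem⟩ := Metric.eventually_nhds_iff.mp hslit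
  set ρ : ℝ := min ε ρbig with hρdef
  have hρ0 : 0 < ρ := lt_min hε0 hρbig0
  refine ⟨Metric.ball 0 ρ, Metric.ball_mem_nhds _ hρ0, ?_⟩
  intro u hu
  set Fc : ℂ → ℂ := fun v => ((1 - β * v) ^ (1 / β) / (1 - α * v) ^ (1 / α)) ^ (-1 / (α - β)) *
      ((1 - β * v) / (1 - α * v)) ^ (((x : ℂ) - c) / (α - β)) with hFcdef
  have hcond : ∀ y : ℂ, y ∈ Metric.ball (0:ℂ) ρ →
      ((1 - β*y) ∈ slitPlane ∧ (1 - α*y) ∈ slitPlane ∧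
       ((1-β*y)^(1/β)/(1-α*y)^(1/α)) ∈ slitPlane ∧ ((1-β*y)/(1-α*y)) ∈ slitPlane) := by
    intro y hy
    apply hεmem
    calc dist y 0 < ρ := Metric.mem_ball.mp hy
      _ ≤ ε := min_le_left _ _
  have hFcd : ∀ y ∈ Metric.ball (0:ℂ) ρ,
      HasDerivAt Fc (Fc y * (((x:ℂ) - c - y)/((1-α*y)*(1-β*y)))) y := by
    intro y hy
    obtain ⟨m1, m2, m3, m4⟩ := hcond y hy
    exact Fderiv α β _ _ hα hβ hαβ (x:ℂ) (c:ℂ) rfl rfl y m1 m2 m3 m4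
  have hFcne : ∀ y ∈ Metric.ball (0:ℂ) ρ, Fc y ≠ 0 := by
    intro y hy
    obtain ⟨m1, m2, m3, m4⟩ := hcond y hy
    simp only [hFcdef]
    exact mul_ne_zero (fun hz => slitPlane_ne_zero m3 ((cpow_eq_zero_iff _ _).mp hz).1)
      (fun hz => slitPlane_ne_zero m4 ((cpow_eq_zero_iff _ _).mp hz).1)
  have hballsub : Metric.ball (0:ℂ) ρ ⊆ Metric.ball (0:ℂ) ρbig :=
    Metric.ball_subset_ball (min_le_right _ _)
  have hφd : ∀ y ∈ Metric.ball (0:ℂ) ρ, HasDerivAt (fun z => H z / Fc z) 0 y := by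
    intro y hy
    have hyb : y ∈ Metric.ball (0:ℂ) ρbig := hballsub hy
    have hyn : ‖y‖ ≤ ρbig := le_of_lt (mem_ball_zero_iff.mp hyb)
    have hHd := Hderiv y hyb
    have hFd := hFcd y hy
    have hFne := hFcne y hy
    have hodey := ode y hyn
    obtain ⟨m1, m2, m3, m4⟩ := hcond y hy
    have hqne : (1 + (lam:ℂ)*y + y^2) ≠ 0 := by
      rw [qfact y]
      exact mul_ne_zero (slitPlane_ne_zero m2) (slitPlane_ne_zero m1)
    have hDval : (∑' n : ℕ, a n * ((n:ℂ) * y^(n-1)))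
        = ((x:ℂ) - c - y) * H y / (1 + (lam:ℂ)*y + y^2) := by
      rw [eq_div_iff hqne]
      rw [hHdef]
      linear_combination hodey
    have hnum : (∑' n : ℕ, a n * ((n:ℂ) * y^(n-1))) * Fc y
        - H y * (Fc y * (((x:ℂ) - c - y)/((1-α*y)*(1-β*y)))) = 0 := by
      rw [hDval, ← qfact y]
      field_simp
      ring
    have hd := hHd.div hFd hFne
    rw [hnum, zero_div] at hd
    exact hd
  have hdiff : DifferentiableOn ℂ (fun z => H z / Fc z) (Metric.ball 0 ρ) :=
    fun z hz => ((hφd z hz).differentiableAt).differentiableWithinAt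
  have hfd0 : ∀ z ∈ Metric.ball (0:ℂ) ρ,
      fderivWithin ℂ (fun z => H z / Fc z) (Metric.ball 0 ρ) z = 0 := by
    intro z hz
    rw [fderivWithin_of_isOpen Metric.isOpen_ball hz, ((hφd z hz).hasFDerivAt).fderiv]
    ext w
    simp
  have hconst := (convex_ball (0:ℂ) ρ).is_const_of_fderivWithin_eq_zero hdiff hfd0 hu
    (Metric.mem_ball_self hρ0)
  have hH0 : H 0 = 1 := by
    simp only [hHdef]
    rw [tsum_eq_single 0 (fun n hn => by simp [zero_pow hn])]
    simp [hadef, he0]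
  have hF0 : Fc 0 = 1 := by
    simp only [hFcdef]
    simp [one_cpow]
  have hHFu : H u = Fc u := by
    have h1 : H u / Fc u = 1 := by rw [hconst, hH0, hF0]; norm_num
    rw [div_eq_one_iff_eq (hFcne u hu)] at h1
    exact h1
  have hfinal : (∑' n : ℕ, u ^ n / ((Nat.factorial n : ℕ) : ℂ) * (((P n).eval x : ℝ) : ℂ)) = H u := by
    simp only [hHdef]
    exact tsum_congr fun n => by
      simp only [hadef, he]
      ring
  rw [hfinal, hHFu, hFcdef]
end

section
/- Let ν be a measure on ℝ \ {0} such that s² ν(ds) is a finite measure and ∫ e^{ε|s|} s² ν(ds) < ∞ for some ε > 0. Then for every θ ∈ ℂ with |θ| < ε, the function s ↦ e^{sθ} - 1 - sθ is ν-integrable and ∫ (e^{sθ} - 1 - sθ) ν(ds) = Σ_{n=2}^∞ (θ^n/n!) ∫ s^{n-2} · s² ν(ds), with the series converging absolutely. -/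
open MeasureTheory
open scoped Nat

theorem stmt19 (ν : Measure ℝ) (hν0 : ν {0} = 0) (ε : ℝ) (hε : 0 < ε)
    (hint : Integrable (fun s : ℝ => Real.exp (ε * |s|) * s ^ 2) ν)
    (θ : ℂ) (hθ : ‖θ‖ < ε) :
    Integrable (fun s : ℝ => Complex.exp (s * θ) - 1 - s * θ) ν ∧
    Summable (fun n : ℕ =>
      ‖θ ^ (n + 2) / (Nat.factorial (n + 2)) * ∫ s : ℝ, (s : ℂ) ^ n * (s : ℂ) ^ 2 ∂ν‖) ∧
    ∫ s : ℝ, (Complex.exp (s * θ) - 1 - s * θ) ∂ν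
      = ∑' n : ℕ, θ ^ (n + 2) / (Nat.factorial (n + 2)) * ∫ s : ℝ, (s : ℂ) ^ n * (s : ℂ) ^ 2 ∂ν := by
  set f : ℕ → ℝ → ℂ := fun n s => θ ^ (n + 2) / ((n + 2)! : ℂ) * (s : ℂ) ^ (n + 2) with hf
  set G : ℝ → ℝ := fun s => Real.exp (ε * |s|) * s ^ 2 with hG
  set c : ℕ → ℝ := fun n => ‖θ‖ ^ (n + 2) / ((n + 2)! : ℝ) * ((n ! : ℝ) / ε ^ n) with hc
  have hGnn : ∀ s, 0 ≤ G s := fun s => by positivity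
  have hnorm : ∀ n s, ‖f n s‖ = ‖θ‖ ^ (n + 2) / ((n + 2)! : ℝ) * |s| ^ (n + 2) := by
    intro n s
    simp [hf, norm_div, norm_pow, Complex.norm_real, Real.norm_eq_abs, abs_of_nonneg,
      Nat.cast_nonneg]
  have hkey : ∀ (n : ℕ) (s : ℝ), |s| ^ (n + 2) ≤ (n ! : ℝ) / ε ^ n * G s := by
    intro n s
    have h1 : (ε * |s|) ^ n / n ! ≤ Real.exp (ε * |s|) :=
      Real.pow_div_factorial_le_exp (x := ε * |s|) (by positivity) n
    have h2 : ε ^ n * |s| ^ n ≤ (n ! : ℝ) * Real.exp (ε * |s|) := by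
      rw [← mul_pow]
      have hn : (0 : ℝ) < (n ! : ℝ) := by positivity
      calc (ε * |s|) ^ n = (n ! : ℝ) * ((ε * |s|) ^ n / n !) := by field_simp
        _ ≤ (n ! : ℝ) * Real.exp (ε * |s|) := by gcongr
    have hepos : (0 : ℝ) < ε ^ n := by positivity
    have : |s| ^ (n + 2) = |s| ^ n * s ^ 2 := by
      rw [pow_add, sq_abs]
    rw [this, hG]
    have h3 : |s| ^ n ≤ (n ! : ℝ) / ε ^ n * Real.exp (ε * |s|) := by
      rw [div_mul_eq_mul_div, le_div_iff₀ hepos]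
      nlinarith
    calc |s| ^ n * s ^ 2 ≤ ((n ! : ℝ) / ε ^ n * Real.exp (ε * |s|)) * s ^ 2 := by
          have : (0 : ℝ) ≤ s ^ 2 := sq_nonneg s
          gcongr
      _ = (n ! : ℝ) / ε ^ n * (Real.exp (ε * |s|) * s ^ 2) := by ring
  have hcnn : ∀ n, 0 ≤ c n := fun n => by positivity
  have hθε : ‖θ‖ / ε < 1 := (div_lt_one hε).2 hθ
  have hc_sum : Summable c := by
    refine Summable.of_nonneg_of_le hcnn (fun n => ?_)
      ((summable_geometric_of_lt_one (by positivity) hθε).mul_left (‖θ‖ ^ 2))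
    have hfac : (n ! : ℝ) ≤ ((n + 2)! : ℝ) := by
      exact_mod_cast Nat.factorial_le (by omega)
    have hfp : (0 : ℝ) < ((n + 2)! : ℝ) := by positivity
    have : c n = ‖θ‖ ^ 2 * (‖θ‖ / ε) ^ n * ((n ! : ℝ) / ((n + 2)! : ℝ)) := by
      rw [hc]; simp only [pow_add, div_pow]; field_simp
    rw [this]
    calc ‖θ‖ ^ 2 * (‖θ‖ / ε) ^ n * ((n ! : ℝ) / ((n + 2)! : ℝ))
        ≤ ‖θ‖ ^ 2 * (‖θ‖ / ε) ^ n * 1 := by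
          gcongr
          exact (div_le_one hfp).2 hfac
      _ = ‖θ‖ ^ 2 * (‖θ‖ / ε) ^ n := by ring
  have hfbound : ∀ (n : ℕ) (s : ℝ), ‖f n s‖ ≤ c n * G s := by
    intro n s
    rw [hnorm, hc]
    calc ‖θ‖ ^ (n + 2) / ((n + 2)! : ℝ) * |s| ^ (n + 2)
        ≤ ‖θ‖ ^ (n + 2) / ((n + 2)! : ℝ) * ((n ! : ℝ) / ε ^ n * G s) := by
          have : (0 : ℝ) ≤ ‖θ‖ ^ (n + 2) / ((n + 2)! : ℝ) := by positivity
          exact mul_le_mul_of_nonneg_left (hkey n s) this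
      _ = ‖θ‖ ^ (n + 2) / ((n + 2)! : ℝ) * ((n ! : ℝ) / ε ^ n) * G s := by ring
  have hfm : ∀ n, AEStronglyMeasurable (f n) ν := by
    intro n
    exact (Continuous.aestronglyMeasurable (by fun_prop))
  have hfint : ∀ n, Integrable (f n) ν := by
    intro n
    refine (hint.const_mul (c n)).mono' (hfm n) ?_
    filter_upwards with s using hfbound n s
  set C : ℝ := ∫ s, G s ∂ν with hC
  have hCnn : 0 ≤ C := integral_nonneg hGnn
  have hint_fn_le : ∀ n, ∫ s, ‖f n s‖ ∂ν ≤ c n * C := by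
    intro n
    calc ∫ s, ‖f n s‖ ∂ν ≤ ∫ s, c n * G s ∂ν :=
          integral_mono (hfint n).norm (hint.const_mul (c n)) (fun s => hfbound n s)
      _ = c n * C := by rw [integral_const_mul]
  have hcC_sum : Summable fun n => c n * C := hc_sum.mul_right C
  have hlin : ∑' n, ∫⁻ s, ‖f n s‖₊ ∂ν ≠ ⊤ := by
    have h1 : ∀ n, ∫⁻ s, ‖f n s‖₊ ∂ν ≤ ENNReal.ofReal (c n * C) := by
      intro n
      simp only [← enorm_eq_nnnorm]
      rw [← ofReal_integral_norm_eq_lintegral_enorm (hfint n)]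
      exact ENNReal.ofReal_le_ofReal (hint_fn_le n)
    have h2 : ∑' n, ∫⁻ s, ‖f n s‖₊ ∂ν ≤ ENNReal.ofReal (∑' n, c n * C) := by
      calc ∑' n, ∫⁻ s, ‖f n s‖₊ ∂ν ≤ ∑' n, ENNReal.ofReal (c n * C) :=
            ENNReal.tsum_le_tsum h1
        _ = ENNReal.ofReal (∑' n, c n * C) :=
            (ENNReal.ofReal_tsum_of_nonneg (fun n => mul_nonneg (hcnn n) hCnn) hcC_sum).symm
    exact (lt_of_le_of_lt h2 ENNReal.ofReal_lt_top).ne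
  have hpt : ∀ s : ℝ, HasSum (fun n => f n s) (Complex.exp (s * θ) - 1 - s * θ) := by
    intro s
    have h := NormedSpace.expSeries_div_hasSum_exp ((s : ℂ) * θ)
    rw [← Complex.exp_eq_exp_ℂ] at h
    have h2 := (hasSum_nat_add_iff' (f := fun n => ((s : ℂ) * θ) ^ n / n !) 2).2 h
    have hsum : ∑ i ∈ Finset.range 2, ((s : ℂ) * θ) ^ i / i ! = 1 + (s : ℂ) * θ := by
      simp [Finset.sum_range_succ]
    rw [hsum] at h2
    have heq : (fun n => ((s : ℂ) * θ) ^ (n + 2) / ((n + 2)! : ℂ)) = fun n => f n s := by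
      funext n
      rw [hf]
      simp only [mul_pow]
      ring
    rw [heq] at h2
    convert h2 using 1
    · rfl
    · ring
  have hgm : AEStronglyMeasurable (fun s : ℝ => Complex.exp (s * θ) - 1 - s * θ) ν :=
    Continuous.aestronglyMeasurable (by fun_prop)
  have hsn : ∀ s : ℝ, Summable fun n => ‖f n s‖ := by
    intro s
    exact Summable.of_nonneg_of_le (fun n => norm_nonneg _) (fun n => hfbound n s)
      (hc_sum.mul_right (G s))
  have hgint : Integrable (fun s : ℝ => Complex.exp (s * θ) - 1 - s * θ) ν := by
    refine (hint.const_mul (∑' n, c n)).mono' hgm ?_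
    filter_upwards with s
    calc ‖Complex.exp (s * θ) - 1 - s * θ‖ = ‖∑' n, f n s‖ := by rw [(hpt s).tsum_eq]
      _ ≤ ∑' n, ‖f n s‖ := norm_tsum_le_tsum_norm (hsn s)
      _ ≤ ∑' n, c n * G s :=
          Summable.tsum_le_tsum (fun n => hfbound n s) (hsn s) (hc_sum.mul_right (G s))
      _ = (∑' n, c n) * G s := tsum_mul_right
  have hterm : ∀ n, θ ^ (n + 2) / ((n + 2)! : ℂ) * ∫ s : ℝ, (s : ℂ) ^ n * (s : ℂ) ^ 2 ∂ν
      = ∫ s, f n s ∂ν := by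
    intro n
    rw [hf]
    simp only [← pow_add]
    rw [integral_const_mul]
  refine ⟨hgint, ?_, ?_⟩
  · refine Summable.of_nonneg_of_le (fun n => norm_nonneg _) (fun n => ?_) hcC_sum
    rw [hterm n]
    calc ‖∫ s, f n s ∂ν‖ ≤ ∫ s, ‖f n s‖ ∂ν := norm_integral_le_integral_norm _
      _ ≤ c n * C := hint_fn_le n
  · have : (fun s : ℝ => Complex.exp (s * θ) - 1 - s * θ) = fun s => ∑' n, f n s :=
      funext fun s => ((hpt s).tsum_eq).symm
    rw [this, integral_tsum hfm hlin]
    exact tsum_congr fun n => (hterm n).symm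
end
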